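/- arXiv:1009.5633 — 2 statements merged into one kernel-verified Lean document; each statement's English description precedes it below -/
import Mathlib

section
/- Every biconnected simple graph of rank exactly 2 is a theta graph Θ(a,b,c): two vertices joined by three internally disjoint paths of lengths a, b, c ≥ 1, at most one of which has length 1. -/
/-!
A graph with `n + 1` edges is not a tree, so `G` contains a cycle `C`. Since `G` has no cut
vertex, there is an ear `P`: a path between two distinct vertices of `C` that is otherwise
disjoint from it, and `C ∪ P` already has one more edge than vertices. Every vertex outside
`C ∪ P` has degree at least two, and by connectivity some edge joins these vertices to `C ∪ P`;
counting degrees, they would need more edges than the `n - |C ∪ P|` left over. Hence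
`G = C ∪ P`, and the ends of `P` cut `C` into the other two paths of the theta graph.
-/

open SimpleGraph

/-- The density of a finite simple graph: number of edges divided by number of vertices. -/
noncomputable def density {V : Type} [Fintype V] (G : SimpleGraph V) : ℝ :=
  (Nat.card G.edgeSet : ℝ) / (Fintype.card V : ℝ)

/-- `H` is a minor of `G`: there is an assignment of disjoint connected branch sets of `G`
(the fibers of `f` over `some w`) to the vertices of `H` such that every edge of `H`
is realized by an edge of `G` between the corresponding branch sets. -/
def IsMinor {W V : Type} (H : SimpleGraph W) (G : SimpleGraph V) : Prop :=
  ∃ f : V → Option W,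
    (∀ w : W, ∃ v : V, f v = some w) ∧
    (∀ w : W, (G.induce {v : V | f v = some w}).Connected) ∧
    (∀ w₁ w₂ : W, H.Adj w₁ w₂ →
      ∃ v₁ v₂ : V, f v₁ = some w₁ ∧ f v₂ = some w₂ ∧ G.Adj v₁ v₂)

/-- A proper minor: a minor with strictly fewer vertices plus edges. -/
def IsProperMinor {W V : Type} [Fintype W] [Fintype V]
    (H : SimpleGraph W) (G : SimpleGraph V) : Prop :=
  IsMinor H G ∧
    Fintype.card W + Nat.card H.edgeSet < Fintype.card V + Nat.card G.edgeSet

/-- A graph is density-minimal if no (nonempty) proper minor has density greater than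
or equal to its own density. -/
def DensityMinimal {V : Type} [Fintype V] (G : SimpleGraph V) : Prop :=
  ∀ (W : Type) [Fintype W] [Nonempty W] (H : SimpleGraph W),
    IsProperMinor H G → density H < density G

/-- A graph is biconnected (2-vertex-connected) if it has at least 3 vertices, is
connected, and remains connected after deleting any single vertex. -/
def Biconnected {V : Type} [Fintype V] (G : SimpleGraph V) : Prop :=
  3 ≤ Fintype.card V ∧ G.Connected ∧
    ∀ v : V, (G.induce {u : V | u ≠ v}).Connected

/-- `G` is a theta graph Θ(a,b,c): two distinct vertices joined by three internally
vertex-disjoint paths of lengths a, b, c which together use every vertex and edge. -/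
def IsThetaGraph {V : Type} (G : SimpleGraph V) (a b c : ℕ) : Prop :=
  ∃ (u v : V), u ≠ v ∧ ∃ (p q r : G.Walk u v),
    p.IsPath ∧ q.IsPath ∧ r.IsPath ∧
    p.length = a ∧ q.length = b ∧ r.length = c ∧
    (∀ x, x ∈ p.support → x ∈ q.support → x = u ∨ x = v) ∧
    (∀ x, x ∈ p.support → x ∈ r.support → x = u ∨ x = v) ∧
    (∀ x, x ∈ q.support → x ∈ r.support → x = u ∨ x = v) ∧
    (∀ e ∈ G.edgeSet, e ∈ p.edges ∨ e ∈ q.edges ∨ e ∈ r.edges) ∧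
    (∀ x : V, x ∈ p.support ∨ x ∈ q.support ∨ x ∈ r.support)

open Finset

namespace SimpleGraph

variable {V : Type} {G : SimpleGraph V}

namespace Walk

lemma mem_edges_of_length_eq_one {u v : V} {p : G.Walk u v} (h : p.length = 1) :
    s(u, v) ∈ p.edges := by
  cases p with
  | nil => simp at h
  | cons _ q =>
    cases q with
    | nil => simp
    | cons _ _ => simp at h

lemma exists_prefix_first_mem {T : Set V} {x y : V} (w : G.Walk x y) (hy : y ∈ T) :
    ∃ b ∈ T, ∃ w' : G.Walk x b, w'.support ⊆ w.support ∧ ∀ z ∈ w'.support, z ∈ T → z = b := by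
  induction w with
  | nil => exact ⟨_, hy, nil, by simp, by simp⟩
  | @cons x _ _ h _ ih =>
    by_cases hx : x ∈ T
    · exact ⟨x, hx, nil, by simp, by simp⟩
    · obtain ⟨b, hb, w', hsub, hfirst⟩ := ih hy
      refine ⟨b, hb, cons h w', List.cons_subset_cons _ hsub, ?_⟩
      simpa [hx] using hfirst

lemma notMem_edges_of_forall_mem_support {w x b : V} {c : G.Walk w w} {p : G.Walk x b}
    (hp : ∀ z ∈ p.support, z ∈ c.support → z = b) {e : Sym2 V} (he : e ∈ p.edges) :
    e ∉ c.edges := by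
  induction e using Sym2.ind with
  | _ y z =>
  intro hc
  have hy := hp y (p.fst_mem_support_of_mem_edges he) (c.fst_mem_support_of_mem_edges hc)
  have hz := hp z (p.snd_mem_support_of_mem_edges he) (c.snd_mem_support_of_mem_edges hc)
  exact (p.adj_of_mem_edges he).ne (hy.trans hz.symm)

variable [DecidableEq V]

lemma IsCycle.card_support_toFinset {u : V} {C : G.Walk u u} (hC : C.IsCycle) :
    #C.support.toFinset = C.length := by
  have : C.support.toFinset = C.support.tail.toFinset := by
    ext x
    simp only [List.mem_toFinset]
    rw [C.mem_support_iff, or_iff_right_of_imp]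
    rintro rfl
    exact C.end_mem_tail_support hC.not_nil
  rw [this, List.toFinset_card_of_nodup hC.support_nodup, List.length_tail, length_support]
  simp

lemma IsCycle.eq_or_eq_of_mem_takeUntil_of_mem_dropUntil {u v x : V} {C : G.Walk u u}
    (hC : C.IsCycle) (hv : v ∈ C.support) (hxp : x ∈ (C.takeUntil v hv).support)
    (hxq : x ∈ (C.dropUntil v hv).support) : x = u ∨ x = v := by
  have htail : (C.takeUntil v hv).support.tail ++ (C.dropUntil v hv).support.tail =
      C.support.tail := by
    rw [← tail_support_append, take_spec]
  have hdisj := List.disjoint_of_nodup_append (htail ▸ hC.support_nodup)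
  rw [mem_support_iff] at hxp hxq
  by_contra! hne
  exact hdisj (hxp.resolve_left hne.1) (hxq.resolve_left hne.2)

end Walk

structure IsEar {w u v : V} (C : G.Walk w w) (P : G.Walk u v) : Prop where
  isPath : P.IsPath
  ne : u ≠ v
  start_mem : u ∈ C.support
  end_mem : v ∈ C.support
  eq_or_eq_of_mem : ∀ x ∈ P.support, x ∈ C.support → x = u ∨ x = v
  notMem_edges : ∀ e ∈ P.edges, e ∉ C.edges

namespace IsEar

variable {w u v : V} {C : G.Walk w w} {P : G.Walk u v}

lemma of_adj (h : G.Adj u v) (hu : u ∈ C.support) (hv : v ∈ C.support)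
    (he : s(u, v) ∉ C.edges) : IsEar C h.toWalk where
  isPath := h.isPath_toWalk
  ne := h.ne
  start_mem := hu
  end_mem := hv
  eq_or_eq_of_mem := by simp
  notMem_edges := by simpa using he

lemma rotate [DecidableEq V] (hP : IsEar C P) {x : V} (hx : x ∈ C.support) :
    IsEar (C.rotate x hx) P where
  isPath := hP.isPath
  ne := hP.ne
  start_mem := by simpa using hP.start_mem
  end_mem := by simpa using hP.end_mem
  eq_or_eq_of_mem y hy hyC := hP.eq_or_eq_of_mem y hy (by simpa using hyC)
  notMem_edges e he heC := hP.notMem_edges e he ((C.rotate_edges x hx).mem_iff.mp heC)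

lemma card_union_add_one [DecidableEq V] (hC : C.IsCycle) (hP : IsEar C P) :
    #(C.support.toFinset ∪ P.support.toFinset) + 1 = #(C.edges.toFinset ∪ P.edges.toFinset) := by
  have hinter : C.support.toFinset ∩ P.support.toFinset = {u, v} := by
    ext x
    simp only [mem_inter, List.mem_toFinset, mem_insert, mem_singleton]
    refine ⟨fun ⟨hxC, hxP⟩ ↦ hP.eq_or_eq_of_mem x hxP hxC, ?_⟩
    rintro (rfl | rfl)
    · exact ⟨hP.start_mem, P.start_mem_support⟩
    · exact ⟨hP.end_mem, P.end_mem_support⟩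
  have hverts := card_union_add_card_inter C.support.toFinset P.support.toFinset
  have hedges : Disjoint C.edges.toFinset P.edges.toFinset :=
    Finset.disjoint_left.mpr fun _ heC heP ↦
      hP.notMem_edges _ (List.mem_toFinset.mp heP) (List.mem_toFinset.mp heC)
  rw [hinter, card_pair hP.ne, hC.card_support_toFinset,
    List.toFinset_card_of_nodup hP.isPath.support_nodup, Walk.length_support] at hverts
  rw [card_union_of_disjoint hedges, List.toFinset_card_of_nodup hC.edges_nodup,
    List.toFinset_card_of_nodup hP.isPath.isTrail.edges_nodup, Walk.length_edges,
    Walk.length_edges]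
  omega

end IsEar

lemma Walk.IsCycle.exists_isEar_of_notMem_support [DecidableEq V] {w x : V} {C : G.Walk w w}
    (hC : C.IsCycle) (hconn : G.Connected) (hcut : ∀ v, (G.induce {u | u ≠ v}).Connected)
    (hx : x ∉ C.support) : ∃ (u v : V) (P : G.Walk u v), IsEar C P := by
  let T : Set V := {z | z ∈ C.support}
  obtain ⟨W⟩ := hconn.preconnected x w
  obtain ⟨b₁, hb₁, W₁, -, hW₁⟩ := W.exists_prefix_first_mem (T := T) C.start_mem_support
  obtain ⟨y, hyC, hyb₁⟩ : ∃ y ∈ C.support, y ≠ b₁ := by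
    have : 1 < #C.support.toFinset := by
      rw [hC.card_support_toFinset]
      have := hC.three_le_length
      omega
    obtain ⟨y, hy, hne⟩ := exists_mem_ne this b₁
    exact ⟨y, List.mem_toFinset.mp hy, hne⟩
  -- `b₁` is not a cut vertex, so `x` also reaches the cycle avoiding `b₁`
  obtain ⟨W'⟩ := (hcut b₁).preconnected ⟨x, fun h ↦ hx (h ▸ hb₁)⟩ ⟨y, hyb₁⟩
  obtain ⟨b₂, hb₂, W₂, hsub, hW₂⟩ :=
    (W'.map (Embedding.induce _).toHom).exists_prefix_first_mem (T := T) hyC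
  have hb₂b₁ : b₂ ≠ b₁ := by
    obtain ⟨z, -, hz⟩ := List.mem_map.mp (Walk.support_map _ W' ▸ hsub W₂.end_mem_support)
    exact hz ▸ z.prop
  refine ⟨b₁, b₂, (W₁.reverse.append W₂).bypass,
    ⟨Walk.bypass_isPath _, hb₂b₁.symm, hb₁, hb₂, fun z hz hzC ↦ ?_, fun e he ↦ ?_⟩⟩
  · rcases (Walk.mem_support_append_iff _ _).mp (Walk.support_bypass_subset_support _ hz) with h | h
    · exact Or.inl (hW₁ z (by simpa using h) hzC)
    · exact Or.inr (hW₂ z h hzC)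
  · rcases List.mem_append.mp (Walk.edges_append _ _ ▸ Walk.edges_bypass_subset_edges _ he)
      with h | h
    · exact Walk.notMem_edges_of_forall_mem_support hW₁ (by simpa using h)
    · exact Walk.notMem_edges_of_forall_mem_support hW₂ h

lemma Walk.IsCycle.exists_isEar [Fintype V] [DecidableEq V] [DecidableRel G.Adj] {w : V}
    {C : G.Walk w w} (hC : C.IsCycle) (hconn : G.Connected)
    (hcut : ∀ v, (G.induce {u | u ≠ v}).Connected) (hm : Fintype.card V < #G.edgeFinset) :
    ∃ (u v : V) (P : G.Walk u v), IsEar C P := by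
  have hlt : #C.edges.toFinset < #G.edgeFinset := by
    rw [List.toFinset_card_of_nodup hC.edges_nodup, Walk.length_edges,
      ← hC.card_support_toFinset]
    exact (card_le_univ _).trans_lt hm
  obtain ⟨e, he, heC⟩ := exists_mem_notMem_of_card_lt_card hlt
  induction e using Sym2.ind with
  | _ a b =>
  replace he : G.Adj a b := mem_edgeFinset.mp he
  rw [List.mem_toFinset] at heC
  by_cases ha : a ∈ C.support
  · by_cases hb : b ∈ C.support
    · exact ⟨a, b, _, IsEar.of_adj he ha hb heC⟩
    · exact hC.exists_isEar_of_notMem_support hconn hcut hb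
  · exact hC.exists_isEar_of_notMem_support hconn hcut ha

theorem Connected.eq_univ_and_eq_edgeFinset [Fintype V] [DecidableEq V] [DecidableRel G.Adj]
    (hconn : G.Connected) (hdeg : ∀ v, 2 ≤ G.degree v) {S : Finset V} {E : Finset (Sym2 V)}
    (hS : S.Nonempty) (hE : E ⊆ G.edgeFinset) (hES : ∀ e ∈ E, ∀ x ∈ e, x ∈ S)
    (hcard : #G.edgeFinset ≤ #E + #Sᶜ) : S = univ ∧ E = G.edgeFinset := by
  classical
  set H := G.deleteEdges E
  have hSc : Sᶜ = ∅ := by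
    by_contra hne
    obtain ⟨r, hr⟩ := nonempty_iff_ne_empty.mpr hne
    obtain ⟨s, hs⟩ := hS
    obtain ⟨W⟩ := hconn.preconnected s r
    obtain ⟨d, -, hd₁, hd₂⟩ := W.exists_boundary_dart {x | x ∈ S} hs (mem_compl.mp hr)
    have hHd : H.Adj d.fst d.snd := by
      rw [deleteEdges_adj]
      exact ⟨d.adj, fun h ↦ hd₂ (hES _ h _ (Sym2.mem_mk_right _ _))⟩
    have hHdeg : ∀ x ∈ Sᶜ, 2 ≤ H.degree x := by
      intro x hx
      convert hdeg x using 1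
      rw [← card_neighborFinset_eq_degree, ← card_neighborFinset_eq_degree]
      congr 1
      ext y
      simp only [mem_neighborFinset, H, deleteEdges_adj, and_iff_left_iff_imp]
      exact fun _ h ↦ mem_compl.mp hx (hES _ h _ (Sym2.mem_mk_left _ _))
    -- the degree sum of `G \ E` is at most `2 #Sᶜ`, but at least `2 #Sᶜ + 1`
    have hsum := H.sum_degrees_eq_twice_card_edges
    rw [← sum_add_sum_compl S, edgeFinset_deleteEdges, card_sdiff_of_subset hE] at hsum
    have hSc := card_nsmul_le_sum _ _ _ hHdeg
    have hSd := single_le_sum (f := fun x ↦ H.degree x) (fun _ _ ↦ Nat.zero_le _) hd₁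
    have := hHd.degree_pos_left
    rw [smul_eq_mul] at hSc
    omega
  rw [compl_eq_empty_iff] at hSc
  rw [hSc, compl_univ, card_empty, add_zero] at hcard
  exact ⟨hSc, eq_of_subset_of_card_le hE hcard⟩

namespace IsEar

variable {u v : V} {C : G.Walk u u} {P : G.Walk u v}

lemma exists_isThetaGraph [DecidableEq V] (hC : C.IsCycle) (hP : IsEar C P)
    (hV : ∀ x, x ∈ C.support ∨ x ∈ P.support) (hE : ∀ e ∈ G.edgeSet, e ∈ C.edges ∨ e ∈ P.edges) :
    ∃ a b c : ℕ, 1 ≤ a ∧ 1 ≤ b ∧ 1 ≤ c ∧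
      ¬(a = 1 ∧ b = 1) ∧ ¬(a = 1 ∧ c = 1) ∧ ¬(b = 1 ∧ c = 1) ∧ IsThetaGraph G a b c := by
  set p := C.takeUntil v hP.end_mem
  set q := C.dropUntil v hP.end_mem
  have hspec : p.append q = C := C.take_spec hP.end_mem
  have hpq : p.length + q.length = C.length := by rw [← Walk.length_append, hspec]
  have hp : 0 < p.length := Walk.not_nil_iff_lt_length.mp (Walk.not_nil_of_ne hP.ne)
  have hq : 0 < q.length := Walk.not_nil_iff_lt_length.mp (Walk.not_nil_of_ne hP.ne.symm)
  have hP₁ : 0 < P.length := Walk.not_nil_iff_lt_length.mp (Walk.not_nil_of_ne hP.ne)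
  have hC₃ := hC.three_le_length
  have hCv : ∀ x, x ∈ C.support ↔ x ∈ p.support ∨ x ∈ q.support := fun x ↦ by
    rw [← hspec, Walk.mem_support_append_iff]
  have hCe : ∀ e, e ∈ C.edges ↔ e ∈ p.edges ∨ e ∈ q.edges := fun e ↦ by
    rw [← hspec, Walk.edges_append, List.mem_append]
  -- an arc of length one and an ear of length one would both be the edge `uv`
  have hchord : ∀ r : G.Walk u v, (∀ e ∈ r.edges, e ∈ C.edges) → r.length = 1 → P.length ≠ 1 :=
    fun r hr h₁ hP₁ ↦ hP.notMem_edges _ (Walk.mem_edges_of_length_eq_one hP₁)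
      (hr _ (Walk.mem_edges_of_length_eq_one h₁))
  refine ⟨p.length, q.reverse.length, P.length, hp, by rwa [Walk.length_reverse], hP₁,
    by rw [Walk.length_reverse]; omega,
    fun h ↦ hchord p (fun e he ↦ (hCe e).mpr (.inl he)) h.1 h.2,
    fun h ↦ hchord q.reverse (fun e he ↦ (hCe e).mpr (.inr (by simpa using he))) h.1 h.2,
    u, v, hP.ne, p, q.reverse, P, hC.isPath_takeUntil _,
    (Walk.IsCycle.isPath_of_append_right (Walk.not_nil_of_ne hP.ne)
      (by rwa [hspec] : (p.append q).IsCycle)).reverse, hP.isPath,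
    rfl, rfl, rfl, ?_, ?_, ?_, ?_, ?_⟩
  · intro x hxp hxq
    exact hC.eq_or_eq_of_mem_takeUntil_of_mem_dropUntil _ hxp (by simpa using hxq)
  · exact fun x hxp hxP ↦ hP.eq_or_eq_of_mem x hxP (C.support_takeUntil_subset_support _ hxp)
  · intro x hxq hxP
    rw [Walk.support_reverse, List.mem_reverse] at hxq
    exact hP.eq_or_eq_of_mem x hxP (C.support_dropUntil_subset_support _ hxq)
  · intro e he
    simpa [hCe, or_assoc] using hE e he
  · intro x
    simpa [hCv, or_assoc] using hV x

lemma covers_of_card_edgeFinset [Fintype V] [DecidableEq V] [DecidableRel G.Adj]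
    (hconn : G.Connected) (hdeg : ∀ v, 2 ≤ G.degree v) (hC : C.IsCycle) (hP : IsEar C P)
    (hm : #G.edgeFinset = Fintype.card V + 1) :
    (∀ x, x ∈ C.support ∨ x ∈ P.support) ∧ ∀ e ∈ G.edgeSet, e ∈ C.edges ∨ e ∈ P.edges := by
  have hE : C.edges.toFinset ∪ P.edges.toFinset ⊆ G.edgeFinset := by
    intro e he
    simp only [mem_union, List.mem_toFinset] at he
    rcases he with he | he <;> exact mem_edgeFinset.mpr (Walk.edges_subset_edgeSet _ he)
  have hES : ∀ e ∈ C.edges.toFinset ∪ P.edges.toFinset, ∀ x ∈ e,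
      x ∈ C.support.toFinset ∪ P.support.toFinset := by
    intro e he x hx
    simp only [mem_union, List.mem_toFinset] at he ⊢
    exact he.imp (Walk.mem_support_of_mem_edges · hx) (Walk.mem_support_of_mem_edges · hx)
  have hcard := hP.card_union_add_one hC
  have := card_le_univ (C.support.toFinset ∪ P.support.toFinset)
  obtain ⟨hVeq, hEeq⟩ := hconn.eq_univ_and_eq_edgeFinset hdeg ⟨u, by simp⟩ hE hES
    (by rw [card_compl]; omega)
  exact ⟨fun x ↦ by simpa using hVeq.ge (mem_univ x),
    fun e he ↦ by simpa using hEeq.ge (mem_edgeFinset.mpr he)⟩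

end IsEar

lemma Connected.exists_isCycle_isEar [Fintype V] [DecidableRel G.Adj] (hconn : G.Connected)
    (hcut : ∀ v, (G.induce {u | u ≠ v}).Connected) (hm : Fintype.card V < #G.edgeFinset) :
    ∃ (u v : V) (C : G.Walk u u) (P : G.Walk u v), C.IsCycle ∧ IsEar C P := by
  classical
  obtain ⟨w, C, hC⟩ : ∃ (w : V) (C : G.Walk w w), C.IsCycle := by
    by_contra! hacyc
    have := IsTree.card_edgeFinset ⟨hconn, hacyc⟩
    omega
  obtain ⟨u, v, P, hP⟩ := hC.exists_isEar hconn hcut hm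
  exact ⟨u, v, C.rotate u hP.start_mem, P, hC.rotate _, hP.rotate _⟩

end SimpleGraph

open SimpleGraph

lemma Biconnected.two_le_degree {V : Type} [Fintype V] {G : SimpleGraph V} [DecidableRel G.Adj]
    (hG : Biconnected G) (v : V) : 2 ≤ G.degree v := by
  classical
  obtain ⟨hcard, hconn, hcut⟩ := hG
  have : Nontrivial V := Fintype.one_lt_card_iff_nontrivial.mp (by omega)
  obtain ⟨w, hvw⟩ := (G.degree_pos_iff_exists_adj v).mp
    (hconn.preconnected.degree_pos_of_nontrivial v)
  obtain ⟨y, -, hy⟩ := exists_mem_notMem_of_card_lt_card (s := {v, w}) (t := univ)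
    ((card_le_two).trans_lt (by rwa [card_univ]))
  simp only [mem_insert, mem_singleton, not_or] at hy
  have : Nontrivial {u | u ≠ w} :=
    nontrivial_of_ne ⟨v, hvw.ne⟩ ⟨y, hy.2⟩ (by simpa [eq_comm] using hy.1)
  obtain ⟨w', hvw'⟩ : ∃ w', (G.induce {u | u ≠ w}).Adj ⟨v, hvw.ne⟩ w' := by
    simpa [IsIsolated] using (hcut w).preconnected.not_isIsolated ⟨v, hvw.ne⟩
  rw [← card_neighborFinset_eq_degree]
  exact one_lt_card.mpr ⟨w, by simpa using hvw, w', by simpa using hvw', fun h ↦ w'.2 h.symm⟩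

/-- Every biconnected simple graph of rank exactly 2 (m = n + 1) is a
theta graph Θ(a,b,c) with a, b, c ≥ 1 and at most one of a, b, c equal to 1. -/
theorem stmt10 (V : Type) [Fintype V] (G : SimpleGraph V)
    (hbc : Biconnected G)
    (hrank : Nat.card G.edgeSet = Fintype.card V + 1) :
    ∃ a b c : ℕ, 1 ≤ a ∧ 1 ≤ b ∧ 1 ≤ c ∧
      ¬(a = 1 ∧ b = 1) ∧ ¬(a = 1 ∧ c = 1) ∧ ¬(b = 1 ∧ c = 1) ∧
      IsThetaGraph G a b c := by
  classical
  have hm : #G.edgeFinset = Fintype.card V + 1 := by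
    rw [edgeFinset_card, ← Nat.card_eq_fintype_card, hrank]
  obtain ⟨u, v, C, P, hC, hP⟩ := hbc.2.1.exists_isCycle_isEar hbc.2.2 (by omega)
  obtain ⟨hV, hE⟩ := hP.covers_of_card_edgeFinset hbc.2.1 hbc.two_le_degree hC hm
  exact hP.exists_isThetaGraph hC hV hE
end

section
/- Let G be a density-minimal finite simple graph. Then the family ComponentFamily(G), consisting of all graphs each of whose connected components is a minor of G, is closed under minors, and its limiting density equals the density of G; that is, every n-vertex member has at most (m/n(G))·n edges, and there exist arbitrarily large members with density exactly m(G)/n(G). -/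
open SimpleGraph

/-- Membership in ComponentFamily(G): every connected component of `H` is a minor of `G`. -/
def InComponentFamily {V W : Type} (G : SimpleGraph V) (H : SimpleGraph W) : Prop :=
  ∀ C : H.ConnectedComponent, IsMinor (H.induce C.supp) G

/-! A connected minor of a graph lies inside a single component, so every component of a minor
of a member of ComponentFamily(G) is a minor of a component of that member, hence of `G`.
By density-minimality every minor of `G` has density at most that of `G`; applied to the
components of a member and summed, this bounds its density. Disjoint copies of `G`, realised
as `G □ ⊥`, attain the density of `G` exactly. -/

variable {V W A : Type}

namespace SimpleGraph

theorem induce_singleton_connected (G : SimpleGraph V) (v : V) : (G.induce {v}).Connected :=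
  (connected_iff _).2 ⟨Preconnected.of_subsingleton, inferInstance⟩

theorem induce_iUnion_connected {ι : Type} (G : SimpleGraph V) (K : SimpleGraph ι)
    (s : ι → Set V) (hs : ∀ i, (G.induce (s i)).Connected) (hK : K.Connected)
    (hadj : ∀ i j, K.Adj i j → ∃ a ∈ s i, ∃ b ∈ s j, G.Adj a b) :
    (G.induce (⋃ i, s i)).Connected := by
  have hsub : ∀ i, s i ⊆ ⋃ i, s i := Set.subset_iUnion s
  have within : ∀ i {a b} (ha : a ∈ s i) (hb : b ∈ s i),
      (G.induce (⋃ i, s i)).Reachable ⟨a, hsub i ha⟩ ⟨b, hsub i hb⟩ := fun i a b ha hb =>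
    ((hs i).preconnected ⟨a, ha⟩ ⟨b, hb⟩).map (G.induceHomOfLE (hsub i)).toHom
  have across : ∀ {i j} (p : K.Walk i j) {a b} (ha : a ∈ s i) (hb : b ∈ s j),
      (G.induce (⋃ i, s i)).Reachable ⟨a, hsub i ha⟩ ⟨b, hsub j hb⟩ := by
    intro i j p
    induction p with
    | nil => exact within _
    | @cons i i' j h p ih =>
      intro a b ha hb
      obtain ⟨c, hc, d, hd, hcd⟩ := hadj _ _ h
      have hcd' : (G.induce (⋃ i, s i)).Adj ⟨c, hsub i hc⟩ ⟨d, hsub i' hd⟩ := hcd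
      exact ((within i ha hc).trans hcd'.reachable).trans (ih hd hb)
  obtain ⟨i⟩ := hK.nonempty
  obtain ⟨⟨a, ha⟩⟩ := (hs i).nonempty
  refine (connected_iff _).2 ⟨?_, ⟨⟨a, hsub i ha⟩⟩⟩
  rintro ⟨a, ha⟩ ⟨b, hb⟩
  obtain ⟨i, hai⟩ := Set.mem_iUnion.1 ha
  obtain ⟨j, hbj⟩ := Set.mem_iUnion.1 hb
  exact across (hK.preconnected i j).some hai hbj

theorem subset_supp_of_induce_connected {G : SimpleGraph V} {s : Set V}
    (hs : (G.induce s).Connected) {v : V} (hv : v ∈ s) :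
    s ⊆ (G.connectedComponentMk v).supp := fun u hu =>
  ConnectedComponent.sound <|
    (hs.preconnected ⟨u, hu⟩ ⟨v, hv⟩).map (Embedding.induce s).toHom

theorem induce_induce_connected {G : SimpleGraph V} {s t : Set V} (hts : t ⊆ s)
    (ht : (G.induce t).Connected) : ((G.induce s).induce {x : s | x.1 ∈ t}).Connected := by
  let φ : G.induce t →g (G.induce s).induce {x : s | x.1 ∈ t} :=
    { toFun := fun x => ⟨⟨x.1, hts x.2⟩, x.2⟩
      map_rel' := id }
  exact ht.map φ fun ⟨⟨a, _⟩, ha⟩ => ⟨⟨a, ha⟩, rfl⟩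

theorem card_eq_sum_card_supp [Fintype A] (H : SimpleGraph A) [Fintype H.ConnectedComponent] :
    Nat.card A = ∑ C : H.ConnectedComponent, Nat.card C.supp := by
  rw [← Nat.card_congr (Equiv.sigmaFiberEquiv H.connectedComponentMk), Nat.card_sigma]
  rfl

theorem card_edgeSet_le_sum_card_edgeSet_induce_supp [Fintype A] (H : SimpleGraph A)
    [Fintype H.ConnectedComponent] :
    Nat.card H.edgeSet ≤ ∑ C : H.ConnectedComponent, Nat.card (H.induce C.supp).edgeSet := by
  rw [← Nat.card_sigma]
  refine Nat.card_le_card_of_surjective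
    (fun e => (Embedding.induce e.1.supp).mapEdgeSet e.2) fun ⟨e, he⟩ => ?_
  induction e with
  | _ a b =>
    have hb : b ∈ (H.connectedComponentMk a).supp :=
      ConnectedComponent.sound (Adj.reachable he).symm
    exact ⟨⟨H.connectedComponentMk a, ⟨s(⟨a, rfl⟩, ⟨b, hb⟩), he⟩⟩, rfl⟩

theorem card_edgeSet_boxProd_bot {ι : Type} [Fintype V] [Fintype ι] (G : SimpleGraph V) :
    Nat.card (G □ (⊥ : SimpleGraph ι)).edgeSet = Fintype.card ι * Nat.card G.edgeSet := by
  classical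
  have hdeg (v : V) (i : ι) [Fintype ((G □ (⊥ : SimpleGraph ι)).neighborSet (v, i))] :
      (G □ (⊥ : SimpleGraph ι)).degree (v, i) = G.degree v := by
    simp [degree_boxProd]
  have hsum := sum_degrees_eq_twice_card_edges (G □ (⊥ : SimpleGraph ι))
  rw [Fintype.sum_prod_type_right] at hsum
  simp only [hdeg, Finset.sum_const, Finset.card_univ, smul_eq_mul] at hsum
  rw [sum_degrees_eq_twice_card_edges] at hsum
  simp only [Nat.card_eq_fintype_card, ← edgeFinset_card]
  lia

def boxProdBotFst {ι : Type} (G : SimpleGraph V) : (G □ (⊥ : SimpleGraph ι)) →g G where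
  toFun := Prod.fst
  map_rel' h := by
    simp only [boxProd_adj, bot_adj, false_and, or_false] at h
    exact h.1

theorem Reachable.snd_eq_of_boxProd_bot {ι : Type} {G : SimpleGraph V} {x y : V × ι}
    (h : (G □ (⊥ : SimpleGraph ι)).Reachable x y) : x.2 = y.2 :=
  reachable_bot.1 (reachable_boxProd.1 h).2

end SimpleGraph

theorem isMinor_of_injective {H : SimpleGraph W} {G : SimpleGraph V} (φ : H →g G)
    (hφ : Function.Injective φ) : IsMinor H G := by
  have hinv := hφ.isPartialInv
  refine ⟨Function.partialInv φ, fun w => ⟨φ w, hinv.eq w⟩, fun w => ?_,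
    fun w₁ w₂ h => ⟨φ w₁, φ w₂, hinv.eq w₁, hinv.eq w₂, φ.map_adj h⟩⟩
  have hfib : {v | Function.partialInv φ v = some w} = {φ w} := by
    ext v
    exact (hinv w v).trans eq_comm
  rw [hfib]
  exact induce_singleton_connected G (φ w)

theorem isMinor_induce (G : SimpleGraph V) (s : Set V) : IsMinor (G.induce s) G :=
  isMinor_of_injective (Embedding.induce s).toHom Subtype.val_injective

theorem IsMinor.trans {K : SimpleGraph W} {H : SimpleGraph A} {G : SimpleGraph V}
    (h₁ : IsMinor K H) (h₂ : IsMinor H G) : IsMinor K G := by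
  obtain ⟨g, gsurj, gconn, gadj⟩ := h₁
  obtain ⟨f, fsurj, fconn, fadj⟩ := h₂
  refine ⟨fun v => (f v).bind g, fun w => ?_, fun w => ?_, fun w₁ w₂ h => ?_⟩
  · obtain ⟨a, ha⟩ := gsurj w
    obtain ⟨v, hv⟩ := fsurj a
    exact ⟨v, by simp [hv, ha]⟩
  · have hfib : {v | (f v).bind g = some w} = ⋃ a : {a | g a = some w}, {v | f v = some a} := by
      ext v
      simp only [Set.mem_ofPred_eq, Option.bind_eq_some_iff, Set.mem_iUnion, Subtype.exists]
      exact ⟨fun ⟨a, hfa, hga⟩ => ⟨a, hga, hfa⟩, fun ⟨a, hga, hfa⟩ => ⟨a, hfa, hga⟩⟩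
    rw [hfib]
    refine induce_iUnion_connected G _ _ (fun a => fconn a) (gconn w) ?_
    rintro ⟨a₁, _⟩ ⟨a₂, _⟩ h
    obtain ⟨v₁, v₂, hv₁, hv₂, hv⟩ := fadj a₁ a₂ h
    exact ⟨v₁, hv₁, v₂, hv₂, hv⟩
  · obtain ⟨a₁, a₂, ha₁, ha₂, ha⟩ := gadj w₁ w₂ h
    obtain ⟨v₁, v₂, hv₁, hv₂, hv⟩ := fadj a₁ a₂ ha
    exact ⟨v₁, v₂, by simp [hv₁, ha₁], by simp [hv₂, ha₂], hv⟩

theorem IsMinor.exists_connectedComponent {K : SimpleGraph W} {H : SimpleGraph A}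
    (h : IsMinor K H) (hK : K.Connected) :
    ∃ C : H.ConnectedComponent, IsMinor K (H.induce C.supp) := by
  obtain ⟨f, fsurj, fconn, fadj⟩ := h
  have hbranch : (H.induce (⋃ w, {a | f a = some w})).Connected := by
    refine induce_iUnion_connected H K _ fconn hK fun w₁ w₂ h => ?_
    obtain ⟨a₁, a₂, ha₁, ha₂, ha⟩ := fadj w₁ w₂ h
    exact ⟨a₁, ha₁, a₂, ha₂, ha⟩
  obtain ⟨w₀⟩ := hK.nonempty
  obtain ⟨a₀, ha₀⟩ := fsurj w₀
  set C := H.connectedComponentMk a₀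
  have hC : ∀ {a w}, f a = some w → a ∈ C.supp := fun {a w} ha =>
    subset_supp_of_induce_connected hbranch (Set.mem_iUnion.2 ⟨w₀, ha₀⟩)
      (Set.mem_iUnion.2 ⟨w, ha⟩)
  refine ⟨C, fun x => f x.1, fun w => ?_, fun w => ?_, fun w₁ w₂ h => ?_⟩
  · obtain ⟨a, ha⟩ := fsurj w
    exact ⟨⟨a, hC ha⟩, ha⟩
  · exact induce_induce_connected (fun a ha => hC ha) (fconn w)
  · obtain ⟨a₁, a₂, ha₁, ha₂, ha⟩ := fadj w₁ w₂ h
    exact ⟨⟨a₁, hC ha₁⟩, ⟨a₂, hC ha₂⟩, ha₁, ha₂, ha⟩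

theorem IsMinor.card_le [Fintype W] [Fintype V] {H : SimpleGraph W} {G : SimpleGraph V}
    (h : IsMinor H G) : Fintype.card W ≤ Fintype.card V := by
  obtain ⟨f, fsurj, -, -⟩ := h
  choose r hr using fsurj
  exact Fintype.card_le_of_injective r fun w₁ w₂ h => Option.some_injective _ <| by
    rw [← hr w₁, ← hr w₂, h]

theorem IsMinor.card_edgeSet_le {H : SimpleGraph W} {G : SimpleGraph V} (h : IsMinor H G)
    [Finite G.edgeSet] : Nat.card H.edgeSet ≤ Nat.card G.edgeSet := by
  obtain ⟨f, -, -, fadj⟩ := h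
  have hlift : ∀ e : H.edgeSet, ∃ e' : G.edgeSet, Sym2.map f e'.1 = Sym2.map some e.1 := by
    rintro ⟨e, he⟩
    induction e with
    | _ w₁ w₂ =>
      obtain ⟨v₁, v₂, hv₁, hv₂, hv⟩ := fadj w₁ w₂ he
      exact ⟨⟨s(v₁, v₂), hv⟩, by simp [hv₁, hv₂]⟩
  choose ψ hψ using hlift
  refine Nat.card_le_card_of_injective ψ fun e₁ e₂ h => Subtype.ext ?_
  apply Sym2.map.injective (Option.some_injective W)
  rw [← hψ e₁, ← hψ e₂, h]

theorem density_nonneg [Fintype V] (G : SimpleGraph V) : 0 ≤ density G := by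
  unfold density
  positivity

theorem density_le_iff [Fintype V] [Nonempty V] {G : SimpleGraph V} {d : ℝ} :
    density G ≤ d ↔ (Nat.card G.edgeSet : ℝ) ≤ d * Fintype.card V :=
  div_le_iff₀ (by exact_mod_cast Fintype.card_pos)

theorem density_congr [Fintype A] [Fintype V] {H : SimpleGraph A} {G : SimpleGraph V}
    (i : H ≃g G) : density H = density G := by
  rw [density, density, Nat.card_congr i.mapEdgeSet, Fintype.card_congr i.toEquiv]

theorem density_boxProd_bot {ι : Type} [Fintype V] [Fintype ι] [Nonempty ι]
    (G : SimpleGraph V) : density (G □ (⊥ : SimpleGraph ι)) = density G := by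
  have hι : (Fintype.card ι : ℝ) ≠ 0 := by exact_mod_cast Fintype.card_ne_zero
  rw [density, density, card_edgeSet_boxProd_bot, Fintype.card_prod, Nat.cast_mul, Nat.cast_mul,
    mul_comm (Fintype.card V : ℝ), mul_div_mul_left _ _ hι]

theorem DensityMinimal.density_le_of_isMinor [Fintype V] [Fintype W] {G : SimpleGraph V}
    (hG : DensityMinimal G) {H : SimpleGraph W} (h : IsMinor H G) : density H ≤ density G := by
  cases isEmpty_or_nonempty W with
  | inl hW => simpa [density] using density_nonneg G
  | inr hW =>
    by_cases hproper : Fintype.card W + Nat.card H.edgeSet < Fintype.card V + Nat.card G.edgeSet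
    · exact (hG W H ⟨h, hproper⟩).le
    · have := h.card_le
      have := h.card_edgeSet_le
      have hV : Fintype.card W = Fintype.card V := by omega
      have hE : Nat.card H.edgeSet = Nat.card G.edgeSet := by omega
      rw [density, density, hV, hE]

theorem density_le_of_forall_connectedComponent [Fintype A] {H : SimpleGraph A} {d : ℝ}
    (hd : 0 ≤ d) (h : ∀ C : H.ConnectedComponent, ∀ [Fintype C.supp],
      density (H.induce C.supp) ≤ d) : density H ≤ d := by
  classical
  cases isEmpty_or_nonempty A with
  | inl hA => simpa [density] using hd
  | inr hA =>
    let := Fintype.ofFinite H.ConnectedComponent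
    have hC (C : H.ConnectedComponent) :
        (Nat.card (H.induce C.supp).edgeSet : ℝ) ≤ d * Nat.card C.supp := by
      have : Nonempty C.supp := C.nonempty_supp.to_subtype
      rw [Nat.card_eq_fintype_card (α := C.supp)]
      exact density_le_iff.1 (h C)
    rw [density_le_iff, ← Nat.card_eq_fintype_card]
    calc (Nat.card H.edgeSet : ℝ)
        ≤ ∑ C : H.ConnectedComponent, (Nat.card (H.induce C.supp).edgeSet : ℝ) := by
          exact_mod_cast card_edgeSet_le_sum_card_edgeSet_induce_supp H
      _ ≤ ∑ C : H.ConnectedComponent, d * (Nat.card C.supp : ℝ) :=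
          Finset.sum_le_sum fun C _ => hC C
      _ = d * Nat.card A := by rw [card_eq_sum_card_supp H, Nat.cast_sum, Finset.mul_sum]

theorem inComponentFamily_of_hom {H : SimpleGraph A} {G : SimpleGraph V} (φ : H →g G)
    (hφ : ∀ a b, H.Reachable a b → φ a = φ b → a = b) : InComponentFamily G H := by
  intro C
  refine isMinor_of_injective (φ.comp (Embedding.induce C.supp).toHom) fun a b hab => ?_
  exact Subtype.ext (hφ a b (C.reachable_of_mem_supp a.2 b.2) hab)

theorem exists_inComponentFamily_density_eq [Fintype V] (G : SimpleGraph V) (k : ℕ) [NeZero k] :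
    ∃ H : SimpleGraph (Fin (Fintype.card V * k)),
      InComponentFamily G H ∧ density H = density G := by
  let e : Fin (Fintype.card V * k) ≃ V × Fin k := (Fintype.equivFinOfCardEq (by simp)).symm
  -- `G □ ⊥` on `V × Fin k` is the disjoint union of `k` copies of `G`
  let i : (G □ (⊥ : SimpleGraph (Fin k))).comap e ≃g G □ (⊥ : SimpleGraph (Fin k)) :=
    ⟨e, Iff.rfl⟩
  refine ⟨_, inComponentFamily_of_hom ((boxProdBotFst G).comp i.toHom) fun a b hab h => ?_,
    (density_congr i).trans (density_boxProd_bot G)⟩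
  exact e.injective (Prod.ext h (Reachable.snd_eq_of_boxProd_bot (hab.map i.toHom)))

/-- For a density-minimal graph G, the family ComponentFamily(G) is
minor-closed, every member has density at most the density of G, and it contains
arbitrarily large members with density exactly that of G; hence its limiting density
equals the density of G. -/
theorem stmt14 (V : Type) [Fintype V] [Nonempty V] (G : SimpleGraph V)
    (hdm : DensityMinimal G) :
    (∀ (A B : Type) [Fintype A] [Fintype B] (H : SimpleGraph A) (H' : SimpleGraph B),
        IsMinor H' H → InComponentFamily G H → InComponentFamily G H') ∧
      (∀ (A : Type) [Fintype A] (H : SimpleGraph A),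
        InComponentFamily G H → density H ≤ density G) ∧
      (∀ N : ℕ, ∃ (n : ℕ) (H : SimpleGraph (Fin n)),
        N ≤ n ∧ InComponentFamily G H ∧ density H = density G) := by
  refine ⟨fun A B _ _ H H' hminor hH C => ?_, fun A _ H hH => ?_, fun N => ?_⟩
  · obtain ⟨D, hD⟩ := ((isMinor_induce H' C.supp).trans hminor).exists_connectedComponent
      C.connected_toSimpleGraph
    exact hD.trans (hH D)
  · exact density_le_of_forall_connectedComponent (density_nonneg G) fun C =>
      hdm.density_le_of_isMinor (hH C)
  · obtain ⟨H, hH, hdens⟩ := exists_inComponentFamily_density_eq G (N + 1)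
    have hV : 0 < Fintype.card V := Fintype.card_pos
    exact ⟨_, H, by nlinarith, hH, hdens⟩
end
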